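/- Let S be a finite set with a ∈ S, let K ⊆ S, and let S₁, …, S_t ⊆ K be any finite sequence of subsets of K. Then for every substochastic DTMC M ∈ ℳ(S, a), successively abstracting over S₁, …, S_t and finally over K equals abstracting over K directly: M − (S₁, …, S_t, K) = M − K. -/

import Mathlib

open scoped ENNReal

namespace PA

variable {α : Type*}

/-- Block contraction auxiliary: `prev` records whether the previous letter was in `K`
(i.e., we are inside a `K`-block whose first letter was already kept). -/
def contractAux [DecidableEq α] (K : Finset α) : Bool → List α → List α
  | _, [] => []
  | prev, a :: x =>
    if a ∈ K then
      (if prev then contractAux K true x else a :: contractAux K true x)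
    else a :: contractAux K false x

/-- `contract K x` is `x − K`: every maximal nonempty factor of `x` consisting of
letters of `K` is replaced by its first letter. -/
def contract [DecidableEq α] (K : Finset α) (x : List α) : List α :=
  contractAux K false x

/-- `preim K x` is `x + K`, the preimage of `x` under `contract K`. -/
def preim [DecidableEq α] (K : Finset α) (x : List α) : Set (List α) :=
  {x' | contract K x' = x}

/-- `minPref L` is `L^≤`: the prefix-minimal elements of `L`. -/
def minPref (L : Set (List α)) : Set (List α) :=
  {x ∈ L | ∀ x', x' <+: x → x' ≠ x → x' ∉ L}

/-- Fusion concatenation: for `u` ending in `a` and `v` starting with `a`,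
`fuse u v` is `u ++ v` with one copy of the shared letter removed. -/
def fuse (u v : List α) : List α := u ++ v.tail

/-- Elementwise fusion of sets of words. -/
def setFuse (X Y : Set (List α)) : Set (List α) :=
  {z | ∃ u ∈ X, ∃ v ∈ Y, z = fuse u v}

/-- Probability mass of a set of words: sum of `P` over the prefix-minimal elements. -/
noncomputable def setP (P : List α → ℝ≥0∞) (R : Set (List α)) : ℝ≥0∞ :=
  ∑' x : minPref R, P x.1

/-- `P ∈ 𝒯(S)`: substochastic transition probability function on `S⁺`. -/
def IsTPF [Fintype α] (P : List α → ℝ≥0∞) : Prop :=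
  (∀ x, P x ≤ 1) ∧ (∀ s : α, P [s] = 1) ∧
  (∀ s : α, (∑ t : α, P [s, t]) ≤ 1) ∧
  (∀ (x y : List α) (s : α), P (x ++ s :: y) = P (x ++ [s]) * P (s :: y))

/-- `(K)₀^M`: the interior of `K` in the DTMC `(P, a)`: states of `K` other than `a`
with no incoming transition from outside `K`. -/
def interior [Fintype α] [DecidableEq α] (P : List α → ℝ≥0∞) (a : α) (K : Finset α) :
    Set α :=
  {s | s ∈ K ∧ s ≠ a ∧ (∑ t ∈ Kᶜ, P [t, s]) = 0}

open Classical in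
noncomputable def abstr [Fintype α] [DecidableEq α]
    (P : List α → ℝ≥0∞) (a : α) (K : Finset α) : List α → ℝ≥0∞ :=
  fun x =>
    if x.length = 1 then 1
    else if 2 ≤ x.length ∧ ∃ s ∈ x, s ∈ interior P a K then 0
    else setP P (preim K x)

open Classical in
noncomputable def OutSet [Fintype α] (P : List α → ℝ≥0∞) (S₁ : Finset α) : Finset α :=
  Finset.univ.filter fun t => t ∉ S₁ ∧ 0 < ∑ s ∈ S₁, P [s, t]

open Classical in
noncomputable def USet [Fintype α] (P : List α → ℝ≥0∞) (S₁ : Finset α) : Finset α :=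
  Finset.univ.filter fun r => r ∈ S₁ ∧
    0 < setP P {x | ∃ (w : List α) (t : α),
      x = r :: (w ++ [t]) ∧ (∀ c ∈ w, c ∈ S₁) ∧ t ∈ OutSet P S₁}

open Classical in
noncomputable def U1Set [Fintype α] (P : List α → ℝ≥0∞) (S₁ : Finset α) : Finset α :=
  Finset.univ.filter fun r => r ∈ S₁ ∧ 0 < ∑ t ∈ OutSet P S₁, P [r, t]

end PA

/-!
Contracting by `S ⊆ K` and then by `K` is contracting by `K`, and the minimal `K`-preimages of
`x` are exactly the minimal `S`-preimages of the minimal `K`-preimages of `x` (each one of its own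
`S`-contraction). Summing over the `S`-preimages first therefore turns `setP (setP P ∘ preim S)`
into `setP P` on `preim K x`, which is `(M − S) − K = M − K` away from the interior zeros.
Abstraction does not change the `K`-interior, and the extra zeros that `M − S` puts on words
through the `S`-interior are zeros of `setP P ∘ preim S` anyway: an interior letter that is not
the first letter of a word is entered from outside `S`, with probability zero. That last step
uses the factorisation `P (x ++ s :: y) = P (x ++ [s]) * P (s :: y)`, which `M − S` inherits
because the minimal preimages of `u ++ s :: v` are exactly the fusions at `s` of those of
`u ++ [s]` and of `s :: v`; so the identity propagates along the list.
-/

namespace PA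

section Contraction

variable {α : Type*} [DecidableEq α] {K S : Finset α} {b : Bool} {c s : α} {l p q z : List α}

def lastMem (K : Finset α) (b : Bool) (l : List α) : Bool :=
  l.foldl (fun _ c => decide (c ∈ K)) b

@[simp] lemma lastMem_nil : lastMem K b [] = b := rfl

@[simp] lemma lastMem_cons : lastMem K b (c :: l) = lastMem K (decide (c ∈ K)) l := rfl

@[simp] lemma lastMem_append_singleton : lastMem K b (l ++ [c]) = decide (c ∈ K) := by
  simp [lastMem]

@[simp] lemma contractAux_nil : contractAux K b [] = [] := rfl

lemma contractAux_cons (K : Finset α) (b : Bool) (c : α) (l : List α) :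
    contractAux K b (c :: l) =
      if c ∈ K then (if b then contractAux K true l else c :: contractAux K true l)
      else c :: contractAux K false l := rfl

lemma contractAux_append (b : Bool) (l r : List α) :
    contractAux K b (l ++ r) = contractAux K b l ++ contractAux K (lastMem K b l) r := by
  induction l generalizing b with
  | nil => rfl
  | cons c l ih => by_cases h : c ∈ K <;> cases b <;> simp [contractAux_cons, h, ih]

lemma contract_cons (K : Finset α) (c : α) (l : List α) :
    contract K (c :: l) = c :: contractAux K (decide (c ∈ K)) l := by
  by_cases h : c ∈ K <;> simp [contract, contractAux_cons, h]

lemma contract_append_cons (q w : List α) (s : α) :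
    contract K (q ++ s :: w) = contract K (q ++ [s]) ++ contractAux K (decide (s ∈ K)) w := by
  rw [← List.singleton_append, ← List.append_assoc, contract, contractAux_append,
    lastMem_append_singleton]
  rfl

@[simp] lemma contract_nil : contract K [] = [] := rfl

@[simp] lemma contract_eq_nil_iff : contract K z = [] ↔ z = [] := by
  cases z <;> simp [contract_cons]

@[simp] lemma head?_contract : (contract K z).head? = z.head? := by
  cases z <;> simp [contract_cons]

lemma contractAux_contractAux (hSK : S ⊆ K) (l : List α) (bS bK : Bool)
    (hb : bS = true → bK = true) :
    contractAux K bK (contractAux S bS l) = contractAux K bK l := by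
  induction l generalizing bS bK with
  | nil => rfl
  | cons c l ih =>
    have := ih true true (fun _ => rfl)
    have := ih false true (fun _ => rfl)
    have := ih false false id
    by_cases hS : c ∈ S
    · have hK : c ∈ K := hSK hS
      cases bS <;> cases bK <;> simp_all [contractAux_cons]
    · by_cases hK : c ∈ K <;> cases bS <;> cases bK <;> simp_all [contractAux_cons]

lemma contract_contract (hSK : S ⊆ K) (l : List α) : contract K (contract S l) = contract K l :=
  contractAux_contractAux hSK l false false id

lemma contract_prefix_contract (h : p <+: q) : contract K p <+: contract K q := by
  obtain ⟨r, rfl⟩ := h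
  rw [contract, contract, contractAux_append]
  exact List.prefix_append _ _

lemma contract_append_singleton_eq_or (l : List α) (c : α) :
    contract K (l ++ [c]) = contract K l ∨ contract K (l ++ [c]) = contract K l ++ [c] := by
  rw [contract, contractAux_append]
  by_cases hc : c ∈ K <;> cases lastMem K false l <;> simp [contractAux_cons, hc, contract]

lemma contract_eq_contract_dropLast_append (hz : z ≠ [])
    (h : contract K z.dropLast ≠ contract K z) :
    contract K z = contract K z.dropLast ++ [z.getLast hz] := by
  have hc := contract_append_singleton_eq_or (K := K) z.dropLast (z.getLast hz)
  rw [List.dropLast_append_getLast hz] at hc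
  exact hc.resolve_left (Ne.symm h)

lemma exists_prefix_contractAux (b : Bool) (hp : p <+: contractAux K b z) :
    ∃ q, q <+: z ∧ contractAux K b q = p := by
  induction z generalizing b p with
  | nil => exact ⟨[], List.nil_prefix, (List.prefix_nil.1 hp).symm⟩
  | cons c z ih =>
    rw [contractAux_cons] at hp
    split_ifs at hp with hc hb
    · obtain ⟨q, hq, rfl⟩ := ih true hp
      exact ⟨c :: q, List.cons_prefix_cons.2 ⟨rfl, hq⟩, by simp [contractAux_cons, hc, hb]⟩
    all_goals
      rcases p with _ | ⟨d, p⟩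
      · exact ⟨[], List.nil_prefix, rfl⟩
      obtain ⟨rfl, hp'⟩ := List.cons_prefix_cons.1 hp
      obtain ⟨q, hq, rfl⟩ := ih _ hp'
      exact ⟨d :: q, List.cons_prefix_cons.2 ⟨rfl, hq⟩, by simp [contractAux_cons, *]⟩

lemma exists_prefix_contract (hp : p <+: contract K z) : ∃ q, q <+: z ∧ contract K q = p :=
  exists_prefix_contractAux false hp

lemma exists_infix_of_mem_contractAux (hs : s ∈ S) (hsz : s ∈ contractAux S b z) :
    (b = false ∧ z.head? = some s) ∨ ∃ t ∉ S, [t, s] <:+: z := by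
  induction z generalizing b with
  | nil => simp at hsz
  | cons c z ih =>
    have lift : (∃ t ∉ S, [t, s] <:+: z) → ∃ t ∉ S, [t, s] <:+: c :: z :=
      fun ⟨t, ht, hinf⟩ => ⟨t, ht, hinf.trans (List.suffix_cons c z).isInfix⟩
    rw [contractAux_cons] at hsz
    split_ifs at hsz with hc hb
    · exact Or.inr (lift ((ih hsz).resolve_left (by simp)))
    · rcases List.mem_cons.1 hsz with rfl | hsz
      · simp_all
      · exact Or.inr (lift ((ih hsz).resolve_left (by simp)))
    · rcases List.mem_cons.1 hsz with rfl | hsz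
      · exact absurd hs hc
      rcases ih hsz with ⟨-, h⟩ | h
      · obtain ⟨w, rfl⟩ : ∃ w, z = s :: w := by
          rcases z with _ | ⟨d, w⟩ <;> simp_all
        exact Or.inr ⟨c, hc, ⟨[], w, by simp⟩⟩
      · exact Or.inr (lift h)

end Contraction

section MinimalPrefixes

variable {α : Type*} {L : Set (List α)} {w z : List α}

lemma exists_mem_minPref_prefix (hz : z ∈ L) : ∃ p ∈ minPref L, p <+: z := by
  obtain ⟨p, ⟨hpL, hpz⟩, hmin⟩ :=
    (measure List.length).wf.has_min {p | p ∈ L ∧ p <+: z} ⟨z, hz, List.prefix_refl z⟩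
  refine ⟨p, ⟨hpL, fun p' hp' hne hp'L => hmin p' ⟨hp'L, hp'.trans hpz⟩ ?_⟩, hpz⟩
  exact lt_of_le_of_ne hp'.length_le fun e => hne (hp'.eq_of_length e)

lemma eq_of_mem_minPref_of_prefix (hw : w ∈ minPref L) (hz : z ∈ L) (h : z <+: w) : z = w := by
  by_contra hne
  exact hw.2 z h hne hz

lemma minPref_eq_singleton (hw : w ∈ L) (h : ∀ z ∈ L, w <+: z) : minPref L = {w} := by
  ext z
  refine ⟨fun hz => (eq_of_mem_minPref_of_prefix hz hw (h z hz.1)).symm, ?_⟩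
  rintro rfl
  exact ⟨hw, fun p hp hne hpL =>
    hne (hp.eq_of_length (le_antisymm hp.length_le (h p hpL).length_le))⟩

lemma setP_of_minPref_eq_singleton {P : List α → ℝ≥0∞} (h : minPref L = {w}) :
    setP P L = P w := by
  rw [setP, h]
  exact tsum_singleton w P

end MinimalPrefixes

section MinimalPreimages

variable {α : Type*} [DecidableEq α] {K : Finset α} {s t : α} {p z u v x : List α}
  {P : List α → ℝ≥0∞}

lemma mem_minPref_preim_iff :
    z ∈ minPref (preim K x) ↔ contract K z = x ∧ (z = [] ∨ contract K z.dropLast ≠ x) := by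
  refine ⟨fun hz => ⟨hz.1, ?_⟩, fun ⟨hz, hlast⟩ => ⟨hz, fun p hp hne hpx => ?_⟩⟩
  · refine or_iff_not_imp_left.2 fun hne hx => ?_
    refine hz.2 z.dropLast (List.dropLast_prefix z) (fun e => hne ?_) hx
    have := congrArg List.length e
    rw [List.length_dropLast] at this
    exact List.eq_nil_of_length_eq_zero (by omega)
  · have hzne : z ≠ [] := by rintro rfl; exact hne (List.prefix_nil.1 hp)
    have hpd : p <+: z.dropLast := by
      refine List.prefix_of_prefix_length_le hp (List.dropLast_prefix z) ?_
      have : p.length ≠ z.length := fun e => hne (hp.eq_of_length e)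
      have : 0 < z.length := List.length_pos_iff.2 hzne
      simp only [List.length_dropLast]
      have := hp.length_le
      omega
    have h1 : x <+: contract K z.dropLast := hpx ▸ contract_prefix_contract hpd
    have h2 : contract K z.dropLast <+: x := hz ▸ contract_prefix_contract (List.dropLast_prefix z)
    exact hlast.resolve_left hzne (h2.eq_of_length_le h1.length_le)

lemma contract_cons_of_notMem (ht : t ∉ K) (w : List α) :
    contract K (t :: w) = t :: contract K w := by
  rw [contract_cons, decide_eq_false ht]
  rfl

lemma singleton_prefix_of_mem_preim (hz : z ∈ preim K (s :: v)) : [s] <+: z := by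
  obtain _ | ⟨c, w⟩ := z
  · simp [preim] at hz
  · have := congrArg List.head? (show contract K (c :: w) = s :: v from hz)
    simp_all

lemma setP_preim_pair (ht : t ∉ K) (s : α) : setP P (preim K [t, s]) = P [t, s] := by
  refine setP_of_minPref_eq_singleton <| minPref_eq_singleton ?_ fun z hz => ?_
  · simp [preim, contract_cons_of_notMem ht, contract_cons]
  · obtain ⟨w, rfl⟩ := singleton_prefix_of_mem_preim hz
    have hw : contract K w = [s] := by
      simpa [preim, contract_cons_of_notMem ht] using hz
    exact List.cons_prefix_cons.2 ⟨rfl, singleton_prefix_of_mem_preim (v := []) hw⟩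

end MinimalPreimages

section Refinement

variable {α : Type*} [DecidableEq α] {K S : Finset α} {x y z : List α}

lemma contract_dropLast_ne_of_mem_minPref_preim (hSK : S ⊆ K) (hz : z ∈ minPref (preim K x))
    (hne : z ≠ []) : contract S z.dropLast ≠ contract S z := by
  intro h
  refine (mem_minPref_preim_iff.1 hz).2.resolve_left hne ?_
  rw [← contract_contract hSK, h, contract_contract hSK]
  exact hz.1

lemma mem_minPref_preim_contract (hSK : S ⊆ K) (hz : z ∈ minPref (preim K x)) :
    z ∈ minPref (preim S (contract S z)) :=
  mem_minPref_preim_iff.2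
    ⟨rfl, (eq_or_ne z []).imp_right (contract_dropLast_ne_of_mem_minPref_preim hSK hz)⟩

lemma contract_mem_minPref_preim (hSK : S ⊆ K) (hz : z ∈ minPref (preim K x)) :
    contract S z ∈ minPref (preim K x) := by
  rw [mem_minPref_preim_iff, contract_contract hSK]
  refine ⟨hz.1, (eq_or_ne z []).imp (by rintro rfl; rfl) fun hne => ?_⟩
  rw [contract_eq_contract_dropLast_append hne
    (contract_dropLast_ne_of_mem_minPref_preim hSK hz hne), List.dropLast_concat,
    contract_contract hSK]
  exact (mem_minPref_preim_iff.1 hz).2.resolve_left hne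

lemma mem_minPref_preim_trans (hSK : S ⊆ K) (hy : y ∈ minPref (preim K x))
    (hz : z ∈ minPref (preim S y)) : z ∈ minPref (preim K x) := by
  rw [mem_minPref_preim_iff] at hy hz ⊢
  obtain ⟨hyx, hy⟩ := hy
  obtain ⟨hzy, hz⟩ := hz
  refine ⟨by rw [← contract_contract hSK, hzy, hyx], hz.imp_right fun hds hK => ?_⟩
  have hne : z ≠ [] := by rintro rfl; exact hds (by simpa using hzy)
  have hyne : y ≠ [] := by rintro rfl; exact hne (contract_eq_nil_iff.1 hzy)
  refine hy.resolve_left hyne ?_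
  rw [← hzy, contract_eq_contract_dropLast_append hne (by rw [hzy]; exact hds),
    List.dropLast_concat, contract_contract hSK, hK]

def minPrefPreimEquivSigma (hSK : S ⊆ K) (x : List α) :
    minPref (preim K x) ≃ Σ y : ↥(minPref (preim K x)), ↥(minPref (preim S y)) where
  toFun z := ⟨⟨contract S z, contract_mem_minPref_preim hSK z.2⟩,
    ⟨z, mem_minPref_preim_contract hSK z.2⟩⟩
  invFun p := ⟨p.2, mem_minPref_preim_trans hSK p.1.2 p.2.2⟩
  left_inv _ := rfl
  right_inv := by
    rintro ⟨⟨y, hy⟩, ⟨z, hz⟩⟩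
    obtain rfl : contract S z = y := hz.1
    rfl

lemma setP_preim_eq_tsum_setP_preim (hSK : S ⊆ K) (P : List α → ℝ≥0∞) (x : List α) :
    setP P (preim K x) = ∑' y : ↥(minPref (preim K x)), setP P (preim S y) := by
  rw [setP, ← (minPrefPreimEquivSigma hSK x).symm.tsum_eq]
  exact ENNReal.tsum_sigma fun (y : ↥(minPref (preim K x))) (z : ↥(minPref (preim S y))) => P z

end Refinement

def IsMultiplicative {α : Type*} (P : List α → ℝ≥0∞) : Prop :=
  ∀ (x y : List α) (s : α), P (x ++ s :: y) = P (x ++ [s]) * P (s :: y)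

section Splitting

variable {α : Type*} [DecidableEq α] {K : Finset α} {s : α} {q u v w z z₁ z₂ w₁ w₂ : List α}

lemma exists_eq_append_singleton_of_mem_minPref_preim
    (hz : z ∈ minPref (preim K (u ++ [s]))) : ∃ q, z = q ++ [s] := by
  obtain ⟨hzu, hlast⟩ := mem_minPref_preim_iff.1 hz
  have hne : z ≠ [] := by rintro rfl; simp at hzu
  have h := contract_eq_contract_dropLast_append hne (hzu ▸ hlast.resolve_left hne)
  rw [hzu] at h
  refine ⟨z.dropLast, ?_⟩
  rw [(List.append_inj' h rfl).2, List.dropLast_append_getLast]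

lemma append_cons_mem_minPref_preim_iff (hq : q ++ [s] ∈ minPref (preim K (u ++ [s]))) :
    q ++ s :: w ∈ minPref (preim K (u ++ s :: v)) ↔ s :: w ∈ minPref (preim K (s :: v)) := by
  obtain ⟨hqu, hlast⟩ := mem_minPref_preim_iff.1 hq
  have hq : contract K q ≠ u ++ [s] := by simpa using hlast
  rw [mem_minPref_preim_iff, mem_minPref_preim_iff, contract_append_cons, hqu, contract_cons]
  rcases w.eq_nil_or_concat' with rfl | ⟨w, d, rfl⟩
  · rcases v with _ | ⟨d, v⟩ <;> simp [hq]
  · rw [List.dropLast_cons_of_ne_nil (by simp), List.dropLast_concat,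
      List.dropLast_append_of_ne_nil (by simp), List.dropLast_cons_of_ne_nil (by simp),
      List.dropLast_concat, contract_append_cons, hqu, contract_cons]
    simp

lemma fuse_mem_minPref_preim (hz₁ : z₁ ∈ minPref (preim K (u ++ [s])))
    (hz₂ : z₂ ∈ minPref (preim K (s :: v))) : fuse z₁ z₂ ∈ minPref (preim K (u ++ s :: v)) := by
  obtain ⟨q, rfl⟩ := exists_eq_append_singleton_of_mem_minPref_preim hz₁
  obtain ⟨w, rfl⟩ := singleton_prefix_of_mem_preim hz₂.1
  simpa [fuse] using (append_cons_mem_minPref_preim_iff hz₁).2 hz₂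

lemma eq_and_eq_of_fuse_eq (hz₁ : z₁ ∈ minPref (preim K (u ++ [s])))
    (hw₁ : w₁ ∈ minPref (preim K (u ++ [s]))) (hz₂ : z₂ ∈ minPref (preim K (s :: v)))
    (hw₂ : w₂ ∈ minPref (preim K (s :: v))) (h : fuse z₁ z₂ = fuse w₁ w₂) :
    z₁ = w₁ ∧ z₂ = w₂ := by
  have h₁ : z₁ = w₁ := by
    have hw : w₁ <+: fuse z₁ z₂ := h ▸ List.prefix_append w₁ w₂.tail
    rcases List.prefix_or_prefix_of_prefix (List.prefix_append z₁ z₂.tail) hw with hp | hp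
    · exact eq_of_mem_minPref_of_prefix hw₁ hz₁.1 hp
    · exact (eq_of_mem_minPref_of_prefix hz₁ hw₁.1 hp).symm
  subst h₁
  obtain ⟨z, rfl⟩ := singleton_prefix_of_mem_preim hz₂.1
  obtain ⟨w, rfl⟩ := singleton_prefix_of_mem_preim hw₂.1
  exact ⟨rfl, by simpa [fuse] using h⟩

lemma exists_fuse_eq (hz : z ∈ minPref (preim K (u ++ s :: v))) :
    ∃ z₁ ∈ minPref (preim K (u ++ [s])), ∃ z₂ ∈ minPref (preim K (s :: v)), fuse z₁ z₂ = z := by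
  obtain ⟨p, hpz, hp⟩ := exists_prefix_contract (K := K) (p := u ++ [s]) (z := z)
    (by rw [hz.1]; exact ⟨v, by simp⟩)
  obtain ⟨z₁, hz₁, hz₁p⟩ := exists_mem_minPref_prefix (L := preim K (u ++ [s])) hp
  obtain ⟨q, rfl⟩ := exists_eq_append_singleton_of_mem_minPref_preim hz₁
  obtain ⟨w, rfl⟩ := hz₁p.trans hpz
  refine ⟨_, hz₁, s :: w, (append_cons_mem_minPref_preim_iff hz₁).1 (by simpa using hz), ?_⟩
  simp [fuse]

noncomputable def minPrefPreimProdEquiv (K : Finset α) (u v : List α) (s : α) :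
    minPref (preim K (u ++ [s])) × minPref (preim K (s :: v)) ≃
      minPref (preim K (u ++ s :: v)) :=
  Equiv.ofBijective (fun p => ⟨fuse p.1 p.2, fuse_mem_minPref_preim p.1.2 p.2.2⟩) <| by
    refine ⟨fun ⟨z₁, z₂⟩ ⟨w₁, w₂⟩ h => ?_, fun ⟨z, hz⟩ => ?_⟩
    · obtain ⟨h₁, h₂⟩ := eq_and_eq_of_fuse_eq z₁.2 w₁.2 z₂.2 w₂.2 (congrArg Subtype.val h)
      rw [Subtype.ext h₁, Subtype.ext h₂]
    · obtain ⟨z₁, hz₁, z₂, hz₂, rfl⟩ := exists_fuse_eq hz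
      exact ⟨⟨⟨z₁, hz₁⟩, ⟨z₂, hz₂⟩⟩, rfl⟩

lemma setP_preim_append_cons {P : List α → ℝ≥0∞} (hP : IsMultiplicative P)
    (u v : List α) (s : α) :
    setP P (preim K (u ++ s :: v)) = setP P (preim K (u ++ [s])) * setP P (preim K (s :: v)) := by
  have hfuse : ∀ p, P (minPrefPreimProdEquiv K u v s p) = P p.1 * P p.2 := by
    rintro ⟨⟨z₁, hz₁⟩, ⟨z₂, hz₂⟩⟩
    obtain ⟨q, rfl⟩ := exists_eq_append_singleton_of_mem_minPref_preim hz₁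
    obtain ⟨w, rfl⟩ := singleton_prefix_of_mem_preim hz₂.1
    simpa [minPrefPreimProdEquiv, fuse] using hP q w s
  rw [setP, ← (minPrefPreimProdEquiv K u v s).tsum_eq, tsum_congr hfuse,
    ENNReal.tsum_prod (f := fun (z₁ : ↥(minPref (preim K (u ++ [s]))))
      (z₂ : ↥(minPref (preim K (s :: v)))) => P z₁ * P z₂)]
  simp only [ENNReal.tsum_mul_left, ENNReal.tsum_mul_right]
  rfl

end Splitting

lemma IsMultiplicative.eq_zero_of_infix {α : Type*} {P : List α → ℝ≥0∞} {s t : α}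
    {z : List α} (hP : IsMultiplicative P) (hts : P [t, s] = 0) (h : [t, s] <:+: z) :
    P z = 0 := by
  obtain ⟨u, w, rfl⟩ := h
  have hzero : P ([t] ++ s :: w) = 0 := by
    rw [hP, show [t] ++ [s] = [t, s] from rfl, hts, zero_mul]
  rw [show u ++ [t, s] ++ w = u ++ t :: ([t] ++ s :: w).tail by simp, hP,
    show t :: ([t] ++ s :: w).tail = [t] ++ s :: w from rfl, hzero, mul_zero]

section Abstraction

variable {α : Type*} [Fintype α] [DecidableEq α] {K S : Finset α} {a s t : α} {x y : List α}
  {P : List α → ℝ≥0∞}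

lemma abstr_singleton (s : α) : abstr P a K [s] = 1 := by
  simp [abstr]

lemma abstr_eq_zero_of_mem_interior (hx : x.length ≠ 1) (hs : s ∈ x) (hsi : s ∈ interior P a K) :
    abstr P a K x = 0 := by
  have := List.length_pos_of_mem hs
  rw [abstr, if_neg hx, if_pos ⟨by omega, s, hs, hsi⟩]

lemma abstr_eq_setP_preim (hx : x.length ≠ 1) (hi : ∀ s ∈ x, s ∉ interior P a K) :
    abstr P a K x = setP P (preim K x) := by
  rw [abstr, if_neg hx, if_neg fun ⟨_, s, hs, hsi⟩ => hi s hs hsi]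

lemma interior_mono (hSK : S ⊆ K) : interior P a S ⊆ interior P a K :=
  fun _ ⟨hs, hsa, hsum⟩ => ⟨hSK hs, hsa, Finset.sum_eq_zero fun t ht =>
    (Finset.sum_eq_zero_iff.1 hsum) t (Finset.compl_subset_compl.2 hSK ht)⟩

lemma pair_eq_zero_of_mem_interior (hs : s ∈ interior P a S) (ht : t ∉ S) : P [t, s] = 0 :=
  (Finset.sum_eq_zero_iff.1 hs.2.2) t (Finset.mem_compl.2 ht)

lemma abstr_pair_of_notMem (ht : t ∉ S) (s : α) : abstr P a S [t, s] = P [t, s] := by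
  by_cases hs : s ∈ interior P a S
  · rw [abstr_eq_zero_of_mem_interior (by simp) (by simp) hs, pair_eq_zero_of_mem_interior hs ht]
  · rw [abstr_eq_setP_preim (by simp), setP_preim_pair ht]
    simp only [List.mem_cons, List.not_mem_nil, or_false, forall_eq_or_imp, forall_eq]
    exact ⟨fun h => ht h.1, hs⟩

lemma interior_abstr (hSK : S ⊆ K) : interior (abstr P a S) a K = interior P a K := by
  ext s
  have h : ∀ t ∈ Kᶜ, abstr P a S [t, s] = P [t, s] := fun t ht =>
    abstr_pair_of_notMem (fun h => Finset.mem_compl.1 ht (hSK h)) s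
  simp only [interior, Set.mem_ofPred_eq, Finset.sum_congr rfl h]

lemma IsMultiplicative.abstr (hP : IsMultiplicative P) : IsMultiplicative (abstr P a S) := by
  intro x y s
  rcases eq_or_ne x [] with rfl | hx
  · simp [abstr_singleton]
  rcases eq_or_ne y [] with rfl | hy
  · simp [abstr_singleton]
  have := List.length_pos_iff.2 hx
  have := List.length_pos_iff.2 hy
  have h₁ : (x ++ s :: y).length ≠ 1 := by simp; omega
  have h₂ : (x ++ [s]).length ≠ 1 := by simp; omega
  have h₃ : (s :: y).length ≠ 1 := by simp; omega
  by_cases hi : ∃ r ∈ x ++ s :: y, r ∈ interior P a S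
  · obtain ⟨r, hr, hri⟩ := hi
    have hr' : r ∈ x ++ [s] ∨ r ∈ s :: y := by
      simp only [List.mem_append, List.mem_cons, List.not_mem_nil, or_false] at hr ⊢
      tauto
    rw [abstr_eq_zero_of_mem_interior h₁ hr hri]
    rcases hr' with h | h
    · rw [abstr_eq_zero_of_mem_interior h₂ h hri, zero_mul]
    · rw [abstr_eq_zero_of_mem_interior h₃ h hri, mul_zero]
  · push Not at hi
    have hpre : x ++ [s] <+: x ++ s :: y := ⟨y, by simp⟩
    rw [abstr_eq_setP_preim h₁ hi, abstr_eq_setP_preim h₂ fun r hr => hi r (hpre.subset hr),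
      abstr_eq_setP_preim h₃ fun r hr => hi r (List.mem_append_right x hr),
      setP_preim_append_cons hP]

lemma setP_preim_eq_zero_of_mem_interior (hP : IsMultiplicative P) (hs : s ∈ interior P a S)
    (hsy : s ∈ y) (hhead : y.head? ≠ some s) : setP P (preim S y) = 0 := by
  refine ENNReal.tsum_eq_zero.2 fun ⟨z, hz, _⟩ => ?_
  have hz : contract S z = y := hz
  rcases exists_infix_of_mem_contractAux hs.1 (b := false) (z := z)
    (show s ∈ contract S z by rwa [hz]) with ⟨-, hh⟩ | ⟨t, ht, hinf⟩
  · exact absurd (by rw [← hz, head?_contract, hh]) hhead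
  · exact hP.eq_zero_of_infix (pair_eq_zero_of_mem_interior hs ht) hinf

lemma abstr_abstr (hP : IsMultiplicative P) (hSK : S ⊆ K) :
    abstr (abstr P a S) a K = abstr P a K := by
  funext x
  by_cases hx : x.length = 1
  · simp [abstr, hx]
  by_cases hi : ∃ s ∈ x, s ∈ interior P a K
  · obtain ⟨s, hs, hsi⟩ := hi
    rw [abstr_eq_zero_of_mem_interior hx hs hsi,
      abstr_eq_zero_of_mem_interior hx hs (by rwa [interior_abstr hSK])]
  push Not at hi
  rw [abstr_eq_setP_preim hx hi, abstr_eq_setP_preim hx (by rwa [interior_abstr hSK]),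
    setP_preim_eq_tsum_setP_preim hSK P x, setP]
  refine tsum_congr fun ⟨y, hy⟩ => ?_
  have hyx : contract K y = x := hy.1
  have hy1 : y.length ≠ 1 := by
    intro h
    obtain ⟨c, rfl⟩ := List.length_eq_one_iff.1 h
    exact hx (by simp [← hyx, contract_cons])
  by_cases hyi : ∃ s ∈ y, s ∈ interior P a S
  · obtain ⟨s, hs, hsi⟩ := hyi
    rw [abstr_eq_zero_of_mem_interior hy1 hs hsi, setP_preim_eq_zero_of_mem_interior hP hsi hs]
    intro hh
    exact hi s (List.mem_of_mem_head? (by rw [← hyx, head?_contract, hh]; rfl))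
      (interior_mono hSK hsi)
  · push Not at hyi
    rw [abstr_eq_setP_preim hy1 hyi]

end Abstraction

end PA

open scoped ENNReal in
/-- abstracting along any finite sequence of subsets of `K` and then
over `K` equals abstracting over `K` directly. -/
theorem abstr_foldl {α : Type*} [Fintype α] [DecidableEq α]
    (a : α) (K : Finset α) (L : List (Finset α)) (hL : ∀ Ki ∈ L, Ki ⊆ K)
    (P : List α → ℝ≥0∞) (hP : PA.IsTPF P) :
    PA.abstr (L.foldl (fun Q Ki => PA.abstr Q a Ki) P) a K = PA.abstr P a K := by
  have hmul : PA.IsMultiplicative P := hP.2.2.2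
  clear hP
  induction L generalizing P with
  | nil => rfl
  | cons S L ih =>
    rw [List.foldl_cons, ih (fun Ki h => hL Ki (List.mem_cons_of_mem S h)) _ hmul.abstr,
      PA.abstr_abstr hmul (hL S List.mem_cons_self)]
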